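/- arXiv:1709.05536 — 2 statements merged into one kernel-verified Lean document; each statement's English description precedes it below -/
import Mathlib

section
/- Let n > 1 be odd, p a prime with p ≡ 1 (mod n), K the subfield of Q(ζ_p) fixed by σ^n where σ generates Gal(Q(ζ_p)/Q). Let z = ζ_p^λ α (1-ζ_p) and x = Tr_{Q(ζ_p)/K}(z). Then Tr_{K/Q}(x²) = p² and Tr_{K/Q}(x·σ^j(x)) = 0 for j ≢ 0 (mod n). -/
/-!
Write `ψ t = ζ^t` for `t : ZMod p` and `ρ = r mod p`, so that `σ (ψ t) = ψ (ρ t)` and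
`ρ^m = -1` for `m = (p-1)/2`. Splitting `∏_{k<p-1} (1 - ψ(ρ^k)) = p` into its two halves gives
`p = (-1)^m ψ(-∑_{k<m} ρ^k) α²`, and `∑_{k<m} ρ^k = -2λ`; hence `C = ζ^λ α` satisfies
`C² = (-1)^m p`, while shifting the product shows `σ C = -C`. Therefore
`σ^k z = (-1)^k C (1 - ψ(ρ^k))`, which has period `p - 1` in `k`.

Unfolding both traces,
`Tr_{K/ℚ}(x σ^j x) = ∑_{b < (p-1)/n} ∑_{k < p-1} σ^k z · σ^{k+j+bn} z`.
Expanding the products with `∑_k ψ(ρ^k t) = p [t = 0] - 1`, the inner sum is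
`(-1)^{j+bn+m} p² + p² [j + bn ≡ m mod p-1]`. The signs cancel over `b` since `n` is odd and
`(p-1)/n` is even, and the congruence holds for exactly one `b` if `j = 0` and for none if
`n ∤ j`.
-/

open Finset

theorem Finset.sum_range_succ_eq_sum_range {M : Type*} [AddCancelCommMonoid M] {g : ℕ → M}
    {q : ℕ} (h : g q = g 0) : ∑ a ∈ range q, g (a + 1) = ∑ a ∈ range q, g a := by
  have := (sum_range_succ' g q).symm.trans (sum_range_succ g q)
  rwa [h, add_left_inj] at this

theorem Finset.sum_range_sum_range_add_mul {M : Type*} [AddCommMonoid M] (f : ℕ → M)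
    (n q : ℕ) :
    ∑ i ∈ range n, ∑ a ∈ range q, f (i + a * n) = ∑ k ∈ range (n * q), f k := by
  induction q with
  | zero => simp
  | succ q ih =>
    simp only [sum_range_succ, sum_add_distrib, ih]
    rw [Nat.mul_succ, sum_range_add]
    simp only [add_comm, mul_comm]

theorem Function.Periodic.sum_range_add_succ_mul {M : Type*} [AddCancelCommMonoid M] {f : ℕ → M}
    {n q : ℕ} (hf : Function.Periodic f (n * q)) (i : ℕ) :
    ∑ a ∈ range q, f (i + (a + 1) * n) = ∑ a ∈ range q, f (i + a * n) :=
  sum_range_succ_eq_sum_range (g := fun a => f (i + a * n)) (by simpa [mul_comm] using hf i)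

theorem sum_range_neg_one_pow_add_mul_add {R : Type*} [Ring R] {n : ℕ} (hn : Odd n)
    (j e s : ℕ) :
    ∑ b ∈ range (2 * s), (-1 : R) ^ (j + b * n + e) = 0 := by
  simp only [pow_add, mul_comm _ n, pow_mul, hn.neg_one_pow, ← mul_sum, ← sum_mul,
    neg_one_geom_sum, even_two_mul, if_true, mul_zero, zero_mul]

theorem Nat.exists_sub_one_eq_mul_two_mul {p n : ℕ} (hp : p.Prime) (hn : Odd n)
    (hpn : p % n = 1) : ∃ s, p - 1 = n * (2 * s) := by
  have hn1 : n ≠ 1 := by rintro rfl; have := Nat.mod_one p; omega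
  have hp2 : p ≠ 2 := by
    rintro rfl
    have : 2 % n = 2 := Nat.mod_eq_of_lt (by obtain ⟨k, hk⟩ := hn; omega)
    omega
  have hdvd : p - 1 = n * (p / n) := by have := Nat.div_add_mod p n; omega
  have heven : Even (n * (p / n)) := hdvd ▸ Nat.Odd.sub_odd (hp.odd_of_ne_two hp2) odd_one
  obtain ⟨s, hs⟩ := (Nat.even_mul.1 heven).resolve_left (Nat.not_even_iff_odd.2 hn)
  exact ⟨s, by rw [hdvd, hs, two_mul]⟩

theorem Nat.mul_modEq_mul_two_mul_iff {n s b : ℕ} (hn : n ≠ 0) (hb : b < 2 * s) :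
    b * n ≡ n * s [MOD n * (2 * s)] ↔ b = s := by
  rw [mul_comm b, Nat.ModEq.mul_left_cancel_iff' hn]
  exact ⟨fun h => h.eq_of_lt_of_lt hb (by omega), fun h => h ▸ rfl⟩

theorem Nat.not_add_mul_modEq_mul {n j b s t : ℕ} (hj : ¬n ∣ j) :
    ¬j + b * n ≡ n * s [MOD n * t] := fun h => hj <| by
  have h' := h.of_mul_right t
  simpa [Nat.ModEq, Nat.add_mul_mod_self_right, Nat.dvd_iff_mod_eq_zero] using h'

theorem AlgEquiv.sum_pow_apply_mul_pow_apply {K L : Type*} [CommSemiring K] [CommRing L]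
    [Algebra K L] (σ : L ≃ₐ[K] L) {z : L} {n q : ℕ}
    (hz : Function.Periodic (fun k => (σ ^ k) z) (n * q))
    {x : L} (hx : x = ∑ a ∈ range q, (σ ^ ((a + 1) * n)) z) (j : ℕ) :
    ∑ i ∈ range n, (σ ^ i) (x * (σ ^ j) x) =
      ∑ b ∈ range q, ∑ k ∈ range (n * q), (σ ^ k) z * (σ ^ (k + j + b * n)) z := by
  set f : ℕ → L := fun k => (σ ^ k) z
  set X : ℕ → L := fun i => ∑ a ∈ range q, f (i + a * n)
  have hσX : ∀ i, (σ ^ i) x = X i := fun i => by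
    simp only [hx, map_sum, ← AlgEquiv.mul_apply, ← pow_add, X, ← hz.sum_range_add_succ_mul]
    rfl
  have hX : Function.Periodic X n := fun i => by
    simp only [X, ← hz.sum_range_add_succ_mul i]
    exact sum_congr rfl fun a _ => by ring_nf
  calc ∑ i ∈ range n, (σ ^ i) (x * (σ ^ j) x)
      = ∑ i ∈ range n, ∑ a ∈ range q, f (i + a * n) * X (i + a * n + j) := by
        refine sum_congr rfl fun i _ => ?_
        rw [map_mul, ← AlgEquiv.mul_apply, ← pow_add, hσX, hσX, sum_mul]
        refine sum_congr rfl fun a _ => ?_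
        rw [add_right_comm]
        exact congrArg _ (hX.nat_mul a _).symm
    _ = ∑ k ∈ range (n * q), f k * X (k + j) :=
        sum_range_sum_range_add_mul (fun k => f k * X (k + j)) n q
    _ = _ := by
        simp only [X, mul_sum]
        rw [sum_comm]

theorem pow_eq_neg_one_of_orderOf_eq_two_mul {R : Type*} [CommRing R] [IsDomain R] {ρ : R}
    {m : ℕ} (hm : m ≠ 0) (hρ : orderOf ρ = 2 * m) : ρ ^ m = -1 := by
  have h := (hρ ▸ IsPrimitiveRoot.orderOf ρ).pow_of_dvd hm (dvd_mul_left m 2)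
  rw [Nat.mul_div_cancel _ (Nat.pos_of_ne_zero hm)] at h
  exact h.eq_neg_one_of_two_right

namespace ZMod

variable {p : ℕ} [Fact p.Prime]

@[to_additive]
theorem prod_range_comp_eq_prod_univ_erase_zero {M : Type*} [CommMonoid M] (g : ZMod p → M)
    {f : ℕ → ZMod p} (hf : Set.InjOn f (range (p - 1))) (hf0 : ∀ k < p - 1, f k ≠ 0) :
    ∏ k ∈ range (p - 1), g (f k) = ∏ u ∈ univ.erase 0, g u := by
  have himage : (range (p - 1)).image f = univ.erase 0 := by
    refine eq_of_subset_of_card_le (fun u hu => ?_) ?_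
    · obtain ⟨k, hk, rfl⟩ := mem_image.1 hu
      exact mem_erase.2 ⟨hf0 k (mem_range.1 hk), mem_univ _⟩
    · rw [card_erase_of_mem (mem_univ _), card_image_of_injOn hf, card_univ, ZMod.card,
        card_range]
  rw [← himage, prod_image hf]

theorem ne_zero_of_orderOf {ρ : ZMod p} (hρ : orderOf ρ = p - 1) : ρ ≠ 0 := by
  rintro rfl
  rw [orderOf_zero] at hρ
  have := (Fact.out : p.Prime).two_le
  omega

@[to_additive sum_range_pow_eq_sum_univ_erase_zero]
theorem prod_range_pow_eq_prod_univ_erase_zero {M : Type*} [CommMonoid M] (g : ZMod p → M)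
    {ρ : ZMod p} (hρ : orderOf ρ = p - 1) :
    ∏ k ∈ range (p - 1), g (ρ ^ k) = ∏ u ∈ univ.erase 0, g u := by
  refine prod_range_comp_eq_prod_univ_erase_zero g ?_ fun k _ =>
    pow_ne_zero k (ne_zero_of_orderOf hρ)
  simpa [hρ] using pow_injOn_Iio_orderOf (x := ρ)

theorem prod_univ_erase_zero_eq_prod_range {M : Type*} [CommMonoid M] (g : ZMod p → M) :
    ∏ u ∈ univ.erase 0, g u = ∏ k ∈ range (p - 1), g (k + 1 : ℕ) := by
  refine (prod_range_comp_eq_prod_univ_erase_zero g (fun a ha b hb hab => ?_) fun k hk => ?_).symm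
  · simp only [coe_range, Set.mem_Iio] at ha hb
    have := congrArg ZMod.val hab
    rwa [ZMod.val_natCast_of_lt (by omega), ZMod.val_natCast_of_lt (by omega), add_left_inj] at this
  · rw [Ne, ZMod.natCast_eq_zero_iff]
    exact Nat.not_dvd_of_pos_of_lt k.succ_pos (by omega)

end ZMod

theorem AddChar.map_sum_eq_prod {A M ι : Type*} [AddCommMonoid A] [CommMonoid M]
    (χ : AddChar A M) (s : Finset ι) (f : ι → A) :
    χ (∑ i ∈ s, f i) = ∏ i ∈ s, χ (f i) := by
  induction s using Finset.cons_induction with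
  | empty => simp
  | cons a s ha ih => rw [sum_cons, prod_cons, map_add_eq_mul, ih]

namespace AddChar

variable {p : ℕ} [Fact p.Prime] {L : Type*} [Field L]

theorem IsPrimitive.of_isPrimitiveRoot {ψ : AddChar (ZMod p) L} (hψ : IsPrimitiveRoot (ψ 1) p) :
    ψ.IsPrimitive :=
  IsPrimitive.of_ne_one fun h => hψ.ne_one (Fact.out : p.Prime).one_lt (by simp [h])

theorem sum_range_pow_mul {ψ : AddChar (ZMod p) L} (hψ : IsPrimitiveRoot (ψ 1) p) {ρ : ZMod p}
    (hρ : orderOf ρ = p - 1) (t : ZMod p) :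
    ∑ k ∈ range (p - 1), ψ (ρ ^ k * t) = (if t = 0 then (p : L) else 0) - 1 := by
  rw [ZMod.sum_range_pow_eq_sum_univ_erase_zero (fun u => ψ (u * t)) hρ,
    sum_erase_eq_sub (mem_univ _), sum_mulShift t (IsPrimitive.of_isPrimitiveRoot hψ),
    ZMod.card, zero_mul, map_zero_eq_one, Nat.cast_ite, Nat.cast_zero]

theorem prod_range_one_sub_pow {ψ : AddChar (ZMod p) L} (hψ : IsPrimitiveRoot (ψ 1) p)
    {ρ : ZMod p} (hρ : orderOf ρ = p - 1) :
    ∏ k ∈ range (p - 1), (1 - ψ (ρ ^ k)) = p := by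
  have hp : p - 1 + 1 = p := Nat.sub_add_cancel (Fact.out : p.Prime).one_le
  rw [ZMod.prod_range_pow_eq_prod_univ_erase_zero (fun u => 1 - ψ u) hρ,
    ZMod.prod_univ_erase_zero_eq_prod_range]
  have hpow : ∀ k : ℕ, ψ k = ψ 1 ^ k := fun k => by rw [← nsmul_one, map_nsmul_eq_pow]
  have hψ' : IsPrimitiveRoot (ψ 1) (p - 1 + 1) := by rwa [hp]
  simp only [hpow]
  rw [hψ'.prod_one_sub_pow_eq_order, ← Nat.cast_add_one, hp]

theorem sum_range_one_sub_mul_one_sub {ψ : AddChar (ZMod p) L} (hψ : IsPrimitiveRoot (ψ 1) p)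
    {ρ : ZMod p} (hρ : orderOf ρ = p - 1) {u : ZMod p} (hu : u ≠ 0) :
    ∑ k ∈ range (p - 1), (1 - ψ (ρ ^ k)) * (1 - ψ (ρ ^ k * u)) =
      p + if u = -1 then (p : L) else 0 := by
  have hexpand : ∀ k, (1 - ψ (ρ ^ k)) * (1 - ψ (ρ ^ k * u)) =
      1 - ψ (ρ ^ k * 1) - ψ (ρ ^ k * u) + ψ (ρ ^ k * (1 + u)) := fun k => by
    rw [mul_one, mul_add, mul_one, map_add_eq_mul]
    ring
  have hcast : ((p - 1 : ℕ) : L) = p - 1 := Nat.cast_pred (Fact.out : p.Prime).pos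
  simp only [hexpand, sum_add_distrib, sum_sub_distrib, sum_const, card_range, nsmul_one, hcast,
    sum_range_pow_mul hψ hρ, one_ne_zero, hu, if_false, add_eq_zero_iff_eq_neg']
  split_ifs <;> ring

end AddChar

section TwistedHalfProd

variable {p : ℕ} [Fact p.Prime] {L : Type*} [Field L]

/-- The paper's `ζ^λ α`, for `ψ t = ζ^t`, `ρ = r` and `m = (p-1)/2`. -/
def twistedHalfProd (ψ : AddChar (ZMod p) L) (ρ lam : ZMod p) (m : ℕ) : L :=
  ψ lam * ∏ j ∈ range m, (1 - ψ (ρ ^ j))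

theorem twistedHalfProd_sq {ψ : AddChar (ZMod p) L} (hψ : IsPrimitiveRoot (ψ 1) p)
    {ρ lam : ZMod p} (hρ : orderOf ρ = p - 1) {m : ℕ} (hm : p - 1 = 2 * m)
    (hlam : lam * (ρ - 1) = 1) :
    twistedHalfProd ψ ρ lam m ^ 2 = (-1) ^ m * p := by
  have hρm : ρ ^ m = -1 := pow_eq_neg_one_of_orderOf_eq_two_mul
    (by have := (Fact.out : p.Prime).two_le; omega) (hρ.trans hm)
  set α := ∏ j ∈ range m, (1 - ψ (ρ ^ j))
  have hsecond : ∀ k, 1 - ψ (ρ ^ (m + k)) = -1 * ψ (-ρ ^ k) * (1 - ψ (ρ ^ k)) := fun k => by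
    have h : ψ (-ρ ^ k) * ψ (ρ ^ k) = 1 := by
      rw [← AddChar.map_add_eq_mul, neg_add_cancel, AddChar.map_zero_eq_one]
    rw [pow_add, hρm, neg_one_mul]
    linear_combination -h
  have hgeom : ∑ k ∈ range m, -ρ ^ k = lam + lam := by
    have h := geom_sum_mul ρ m
    rw [hρm] at h
    rw [sum_neg_distrib]
    linear_combination (∑ k ∈ range m, ρ ^ k) * hlam - lam * h
  have hp : (p : L) = (-1) ^ m * ψ (lam + lam) * α ^ 2 := by
    rw [← AddChar.prod_range_one_sub_pow hψ hρ, hm, two_mul, prod_range_add]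
    simp only [hsecond, prod_mul_distrib, prod_const, card_range, ← AddChar.map_sum_eq_prod,
      hgeom]
    ring
  have hsign : (-1 : L) ^ (m + m) = 1 := Even.neg_one_pow ⟨m, rfl⟩
  rw [twistedHalfProd, hp, AddChar.map_add_eq_mul]
  linear_combination (-(ψ lam) ^ 2 * α ^ 2) * hsign

theorem map_twistedHalfProd {ψ : AddChar (ZMod p) L} (hψ : ψ 1 ≠ 1) {ρ lam : ZMod p} {m : ℕ}
    (hρm : ρ ^ m = -1) (hlam : lam * (ρ - 1) = 1) {F : Type*} [FunLike F L L]
    [RingHomClass F L L] {σ : F} (hσ : ∀ t, σ (ψ t) = ψ (ρ * t)) :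
    σ (twistedHalfProd ψ ρ lam m) = -twistedHalfProd ψ ρ lam m := by
  set α := ∏ j ∈ range m, (1 - ψ (ρ ^ j))
  have hσα : σ α = -ψ (-1) * α := by
    have hshift : σ α * (1 - ψ 1) = α * (1 - ψ (ρ ^ m)) := by
      have h := (prod_range_succ' (fun j => 1 - ψ (ρ ^ j)) m).symm.trans
        (prod_range_succ (fun j => 1 - ψ (ρ ^ j)) m)
      simpa only [α, map_prod, map_sub, map_one, hσ, ← pow_succ', pow_zero] using h
    have hψ1 : (1 : L) - ψ 1 ≠ 0 := sub_ne_zero.2 (Ne.symm hψ)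
    refine mul_right_cancel₀ hψ1 (hshift.trans ?_)
    rw [hρm]
    have h : ψ (-1) * ψ 1 = 1 := by
      rw [← AddChar.map_add_eq_mul, neg_add_cancel, AddChar.map_zero_eq_one]
    linear_combination (-α) * h
  have hexp : ψ (ρ * lam) * ψ (-1) = ψ lam := by
    rw [← AddChar.map_add_eq_mul]
    congr 1
    linear_combination hlam
  rw [twistedHalfProd, map_mul, hσ, hσα, ← hexp]
  ring

theorem pow_apply_twistedHalfProd_mul {ψ : AddChar (ZMod p) L} {ρ : ZMod p} {c : L}
    {K : Type*} [CommSemiring K] [Algebra K L] {σ : L ≃ₐ[K] L} (hc : σ c = -c)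
    (hσ : ∀ t, σ (ψ t) = ψ (ρ * t)) (k : ℕ) :
    (σ ^ k) (c * (1 - ψ 1)) = (-1) ^ k * c * (1 - ψ (ρ ^ k)) := by
  induction k with
  | zero => simp
  | succ k ih =>
    rw [pow_succ', AlgEquiv.mul_apply, ih, map_mul, map_mul, map_sub, map_one, hσ, hc, map_pow,
      map_neg, map_one, ← pow_succ']
    ring

theorem sum_range_mul_shift_eq {ψ : AddChar (ZMod p) L} (hψ : IsPrimitiveRoot (ψ 1) p)
    {ρ : ZMod p} (hρ : orderOf ρ = p - 1) {m : ℕ} (hm : p - 1 = 2 * m) {c : L}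
    (hc : c ^ 2 = (-1) ^ m * p) (e : ℕ) :
    ∑ k ∈ range (p - 1),
        (-1) ^ k * c * (1 - ψ (ρ ^ k)) * ((-1) ^ (k + e) * c * (1 - ψ (ρ ^ (k + e)))) =
      (-1) ^ (e + m) * p ^ 2 + if e ≡ m [MOD p - 1] then (p : L) ^ 2 else 0 := by
  have hm0 : m ≠ 0 := by have := (Fact.out : p.Prime).two_le; omega
  have hρm : ρ ^ m = -1 := pow_eq_neg_one_of_orderOf_eq_two_mul hm0 (hρ.trans hm)
  have hterm : ∀ k,
      (-1) ^ k * c * (1 - ψ (ρ ^ k)) * ((-1) ^ (k + e) * c * (1 - ψ (ρ ^ (k + e)))) =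
        (-1) ^ e * c ^ 2 * ((1 - ψ (ρ ^ k)) * (1 - ψ (ρ ^ k * ρ ^ e))) := fun k => by
    have hk : (-1 : L) ^ k * (-1) ^ k = 1 := by
      rw [← pow_add]
      exact Even.neg_one_pow ⟨k, rfl⟩
    rw [pow_add, pow_add]
    linear_combination (-1) ^ e * c ^ 2 * (1 - ψ (ρ ^ k)) * (1 - ψ (ρ ^ k * ρ ^ e)) * hk
  have hiff : ρ ^ e = -1 ↔ e ≡ m [MOD p - 1] := by
    rw [← hρm, (orderOf_pos_iff.1 (hρ.trans_gt (by omega))).pow_eq_pow_iff_modEq, hρ]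
  rw [sum_congr rfl fun k _ => hterm k, ← mul_sum,
    AddChar.sum_range_one_sub_mul_one_sub hψ hρ (pow_ne_zero e (ZMod.ne_zero_of_orderOf hρ)),
    hc]
  by_cases he : e ≡ m [MOD p - 1]
  · rw [if_pos (hiff.2 he), if_pos he]
    have hsign : (-1 : L) ^ (e + m) = 1 := by
      rw [neg_one_pow_eq_pow_mod_two, Nat.add_mod, ((hm ▸ he).of_mul_right m : e % 2 = m % 2),
        ← Nat.add_mod, ← neg_one_pow_eq_pow_mod_two]
      exact Even.neg_one_pow ⟨m, rfl⟩
    linear_combination (p : L) ^ 2 * hsign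
  · rw [if_neg (mt hiff.1 he), if_neg he]
    ring

theorem sum_pow_apply_mul_pow_apply_eq {ψ : AddChar (ZMod p) L} (hψ : IsPrimitiveRoot (ψ 1) p)
    {ρ : ZMod p} (hρ : orderOf ρ = p - 1) {n s : ℕ} (hn : Odd n) (hs : p - 1 = n * (2 * s))
    {c : L} (hc : c ^ 2 = (-1) ^ (n * s) * p) {K : Type*} [CommSemiring K] [Algebra K L]
    {σ : L ≃ₐ[K] L} {z : L} (hz : ∀ k, (σ ^ k) z = (-1) ^ k * c * (1 - ψ (ρ ^ k)))
    {x : L} (hx : x = ∑ a ∈ range (2 * s), (σ ^ ((a + 1) * n)) z) (j : ℕ) :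
    ∑ i ∈ range n, (σ ^ i) (x * (σ ^ j) x) =
      ∑ b ∈ range (2 * s),
        if j + b * n ≡ n * s [MOD n * (2 * s)] then (p : L) ^ 2 else 0 := by
  have hm : p - 1 = 2 * (n * s) := by rw [hs]; ring
  have hper : Function.Periodic (fun k => (σ ^ k) z) (n * (2 * s)) := fun k => by
    have hsign : (-1 : L) ^ (p - 1) = 1 := Even.neg_one_pow ⟨n * s, by omega⟩
    have hρ1 : ρ ^ (p - 1) = 1 := hρ ▸ pow_orderOf_eq_one ρ
    show (σ ^ (k + n * (2 * s))) z = (σ ^ k) z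
    rw [hz, hz, ← hs, pow_add, pow_add, hsign, hρ1, mul_one, mul_one]
  rw [σ.sum_pow_apply_mul_pow_apply hper hx j, ← hs]
  simp only [hz, add_assoc]
  rw [sum_congr rfl fun b _ => sum_range_mul_shift_eq hψ hρ hm hc (j + b * n), sum_add_distrib,
    ← sum_mul, sum_range_neg_one_pow_add_mul_add hn, zero_mul, zero_add]

end TwistedHalfProd

namespace AddChar

variable {p : ℕ} [Fact p.Prime] {L : Type*} [Field L] {ζ : L} (hζ : ζ ^ p = 1)

theorem zmodChar_one : zmodChar p hζ 1 = ζ := by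
  rw [← Nat.cast_one, zmodChar_apply', pow_one]

theorem zmodChar_intCast (k : ℤ) : zmodChar p hζ (k : ZMod p) = ζ ^ k := by
  rw [← zsmul_one, map_zsmul_eq_zpow, zmodChar_one]

theorem map_zmodChar {F : Type*} [FunLike F L L] [RingHomClass F L L] {σ : F} {r : ℕ}
    (hσ : σ ζ = ζ ^ r) (t : ZMod p) : σ (zmodChar p hζ t) = zmodChar p hζ (r * t) := by
  rw [zmodChar_apply, map_pow, hσ, ← pow_mul, ← zmodChar_apply' hζ, Nat.cast_mul,
    ZMod.natCast_val, ZMod.cast_id]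

theorem twistedHalfProd_zmodChar (r : ℕ) (lam : ℤ) (m : ℕ) :
    twistedHalfProd (zmodChar p hζ) (r : ZMod p) (lam : ZMod p) m =
      ζ ^ lam * ∏ j ∈ range m, (1 - ζ ^ r ^ j) := by
  simp only [twistedHalfProd, zmodChar_intCast, ← Nat.cast_pow, zmodChar_apply']

end AddChar

theorem pow_apply_zpow_mul_prod_mul_one_sub {p : ℕ} [Fact p.Prime] {L : Type*} [Field L]
    {ζ : L} (hζ : IsPrimitiveRoot ζ p) {r : ℕ} (hr : orderOf (r : ZMod p) = p - 1) {m : ℕ}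
    (hm : p - 1 = 2 * m) {lam : ℤ}
    (hlam : (lam : ZMod p) * ((r : ZMod p) - 1) = 1) {K : Type*} [CommSemiring K] [Algebra K L]
    {σ : L ≃ₐ[K] L} (hσ : σ ζ = ζ ^ r) (k : ℕ) :
    (σ ^ k) (ζ ^ lam * (∏ j ∈ range m, (1 - ζ ^ r ^ j)) * (1 - ζ)) =
      (-1) ^ k * twistedHalfProd (AddChar.zmodChar p hζ.pow_eq_one) r lam m *
        (1 - AddChar.zmodChar p hζ.pow_eq_one ((r : ZMod p) ^ k)) := by
  have hσψ := AddChar.map_zmodChar hζ.pow_eq_one hσ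
  have hρm := pow_eq_neg_one_of_orderOf_eq_two_mul
    (by have := (Fact.out : p.Prime).two_le; omega) (hr.trans hm)
  have hψ1 := AddChar.zmodChar_one hζ.pow_eq_one
  have hψ1ne : AddChar.zmodChar p hζ.pow_eq_one 1 ≠ 1 := by
    rw [hψ1]
    exact hζ.ne_one (Fact.out : p.Prime).one_lt
  rw [← AddChar.twistedHalfProd_zmodChar hζ.pow_eq_one,
    show (1 : L) - ζ = 1 - AddChar.zmodChar p hζ.pow_eq_one 1 by rw [hψ1]]
  exact pow_apply_twistedHalfProd_mul (map_twistedHalfProd hψ1ne hρm hlam hσψ) hσψ k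

theorem stmt3_general (p n : ℕ) (hp : p.Prime) (hnodd : Odd n) (hpn : p % n = 1)
    (L : Type*) [Field L] [CharZero L]
    (ζ : L) (hζ : IsPrimitiveRoot ζ p)
    (r : ℕ) (hr : orderOf (r : ZMod p) = p - 1)
    (lam : ℤ) (hlam : ((lam * ((r : ℤ) - 1) : ℤ) : ZMod p) = 1)
    (σ : L ≃ₐ[ℚ] L) (hσ : σ ζ = ζ ^ r)
    (z : L)
    (hz : z = ζ ^ lam * (∏ j ∈ Finset.range ((p - 1) / 2), (1 - ζ ^ r ^ j)) * (1 - ζ))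
    (x : L) (hx : x = ∑ j ∈ Finset.range ((p - 1) / n), (σ ^ ((j + 1) * n)) z) :
    (∑ i ∈ Finset.range n, (σ ^ i) (x * x) = (p : L) ^ 2) ∧
      ∀ j : ℕ, ¬ n ∣ j → ∑ i ∈ Finset.range n, (σ ^ i) (x * (σ ^ j) x) = 0 := by
  have := Fact.mk hp
  obtain ⟨s, hs⟩ := Nat.exists_sub_one_eq_mul_two_mul hp hnodd hpn
  have hn : n ≠ 0 := by rintro rfl; rw [Nat.mod_zero] at hpn; exact hp.ne_one hpn
  have hs0 : s ≠ 0 := by rintro rfl; have := hp.two_le; rw [mul_zero, mul_zero] at hs; omega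
  have hm : p - 1 = 2 * (n * s) := by rw [hs]; ring
  have hψ := (AddChar.zmodChar_one hζ.pow_eq_one).symm ▸ hζ
  have hlam' : (lam : ZMod p) * ((r : ZMod p) - 1) = 1 := by exact_mod_cast hlam
  have hx' : x = ∑ a ∈ range (2 * s), (σ ^ ((a + 1) * n)) z := by
    rwa [hs, Nat.mul_div_cancel_left _ (Nat.pos_of_ne_zero hn)] at hx
  rw [show (p - 1) / 2 = n * s by omega] at hz
  subst hz
  have key := sum_pow_apply_mul_pow_apply_eq hψ hr hnodd hs (twistedHalfProd_sq hψ hr hm hlam')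
    (pow_apply_zpow_mul_prod_mul_one_sub hζ hr hm hlam' hσ) hx'
  refine ⟨?_, fun j hj => ?_⟩
  · have h0 := key 0
    simp only [pow_zero, AlgEquiv.one_apply, zero_add] at h0
    rw [h0, sum_congr rfl fun b hb => if_congr (Nat.mul_modEq_mul_two_mul_iff hn (mem_range.1 hb))
      rfl rfl, sum_ite_eq', if_pos (mem_range.2 (by omega))]
  · rw [key]
    exact sum_eq_zero fun b _ => if_neg (Nat.not_add_mul_modEq_mul hj)

/-- Let `n > 1` be odd, `p ≡ 1 (mod n)` prime, `K` the fixed field of `σ^n` in `ℚ(ζ_p)`,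
`z = ζ^λ α (1-ζ)` and `x = Tr_{ℚ(ζ_p)/K}(z) = ∑_{j=1}^{(p-1)/n} σ^{jn}(z)`.
Then `Tr_{K/ℚ}(x²) = p²` and `Tr_{K/ℚ}(x σ^j(x)) = 0` for `j ≢ 0 (mod n)`,
where the trace from the degree-`n` field `K` is the sum over the `n` conjugates `σ^i`. -/
theorem stmt3 (p n : ℕ) (hp : p.Prime) (hn1 : 1 < n) (hnodd : Odd n) (hpn : p % n = 1)
    (L : Type*) [Field L] [CharZero L]
    (ζ : L) (hζ : IsPrimitiveRoot ζ p)
    (r : ℕ) (hr : orderOf (r : ZMod p) = p - 1)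
    (lam : ℤ) (hlam : ((lam * ((r : ℤ) - 1) : ℤ) : ZMod p) = 1)
    (σ : L ≃ₐ[ℚ] L) (hσ : σ ζ = ζ ^ r)
    (z : L)
    (hz : z = ζ ^ lam * (∏ j ∈ Finset.range ((p - 1) / 2), (1 - ζ ^ r ^ j)) * (1 - ζ))
    (x : L) (hx : x = ∑ j ∈ Finset.range ((p - 1) / n), (σ ^ ((j + 1) * n)) z) :
    (∑ i ∈ Finset.range n, (σ ^ i) (x * x) = (p : L) ^ 2) ∧
      ∀ j : ℕ, ¬ n ∣ j → ∑ i ∈ Finset.range n, (σ ^ i) (x * (σ ^ j) x) = 0 :=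
  stmt3_general p n hp hnodd hpn L ζ hζ r hr lam hlam σ hσ z hz x hx
end

section
/- The ℤ-module I = ⟨x, σ(x), ..., σ^{n-1}(x)⟩_ℤ, where x = Tr_{Q(ζ_p)/K}(z), is an ideal of the ring of integers O_K of K. -/
/-!
Put `w = ζ^λ ∏_{j < (p-1)/2} (1 - ζ^{r^j})`, so that `z = (1 - ζ) w`. Applying `σ` multiplies
`ζ^λ` by `ζ` (as `λ (r - 1) ≡ 1`) and shifts the factors of the product, which telescopes since
`r^{(p-1)/2} ≡ -1`; the upshot is `σ w = -w`, hence `σ^m z = ±(1 - ζ^{r^m}) w`. As `r` generates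
`(ℤ/p)ˣ`, every `(1 - ζ^s) w` lies in the `ℤ`-span `M` of the conjugates of `z`, and so does
`ζ^k z = (1 - ζ^{k+1}) w - (1 - ζ^k) w`: `M` is a module over `ℤ[ζ] = O_{ℚ(ζ_p)}`.
The trace to `K` commutes with `σ` and is `K`-linear, so it carries `M` into `I`, and
`σ^m(x) c = σ^m(Tr(z σ^{-m}(c)))` puts `I · O_K` inside `I`.
-/

open Finset

section Automorphisms

variable {F L : Type*} [CommRing F] [CommRing L] [Algebra F L] (σ : L ≃ₐ[F] L)

lemma pow_apply_eq_self_of_apply_eq {c : L} (hc : σ c = c) (k : ℕ) : (σ ^ k) c = c := by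
  rw [AlgEquiv.coe_pow]
  exact Function.IsFixedPt.iterate hc k

lemma pow_apply_eq_pow_pow {ζ : L} {r : ℕ} (hσ : σ ζ = ζ ^ r) (m : ℕ) :
    (σ ^ m) ζ = ζ ^ r ^ m := by
  induction m with
  | zero => simp
  | succ m ih => rw [pow_succ', AlgEquiv.mul_apply, ih, map_pow, hσ, ← pow_mul, ← pow_succ']

lemma pow_apply_one_sub_mul {ζ w : L} {r : ℕ} (hσ : σ ζ = ζ ^ r) (hw : σ w = -w) (m : ℕ) :
    (σ ^ m) ((1 - ζ) * w) = (-1) ^ m * ((1 - ζ ^ r ^ m) * w) := by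
  have hwm : (σ ^ m) w = (-1) ^ m * w := by
    induction m with
    | zero => simp
    | succ m ih => rw [pow_succ', AlgEquiv.mul_apply, ih, map_mul, hw]; simp [pow_succ]
  rw [map_mul, hwm, map_sub, map_one, pow_apply_eq_pow_pow σ hσ]
  ring

lemma IsIntegral.map_algEquiv {c : L} (hc : IsIntegral ℤ c) : IsIntegral ℤ (σ c) :=
  hc.map σ.toRingEquiv.toRingHom.toIntAlgHom

variable {σ} in
lemma apply_symm_apply_eq_of_commute {τ : L ≃ₐ[F] L} (h : Commute τ σ) {c : L} (hc : τ c = c) :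
    τ (σ.symm c) = σ.symm c :=
  σ.injective (by
    rw [← AlgEquiv.mul_apply, ← h.eq, AlgEquiv.mul_apply, AlgEquiv.apply_symm_apply, hc])

end Automorphisms

section OrbitSpan

variable {F L : Type*} [CommRing F] [CommRing L] [Algebra F L] (σ : L ≃ₐ[F] L)

def orbitSpan (z : L) : Submodule ℤ L :=
  Submodule.span ℤ (Set.range fun m : ℕ => (σ ^ m) z)

lemma pow_apply_mem_orbitSpan (z : L) (m : ℕ) : (σ ^ m) z ∈ orbitSpan σ z :=
  Submodule.subset_span ⟨m, rfl⟩

lemma map_mem_orbitSpan (T : L →+ L) (hT : ∀ m y, T ((σ ^ m) y) = (σ ^ m) (T y)) {z y : L}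
    (hy : y ∈ orbitSpan σ z) : T y ∈ orbitSpan σ (T z) := by
  have hle : (orbitSpan σ z).map T.toIntLinearMap ≤ orbitSpan σ (T z) := by
    rw [orbitSpan, Submodule.map_span_le]
    rintro _ ⟨m, rfl⟩
    rw [AddMonoidHom.coe_toIntLinearMap, hT]
    exact pow_apply_mem_orbitSpan σ (T z) m
  exact hle ⟨y, hy, rfl⟩

lemma pow_apply_mem_orbitSpan_of_mem {z y : L} (hy : y ∈ orbitSpan σ z) (t : ℕ) :
    (σ ^ t) y ∈ orbitSpan σ z := by
  induction hy using Submodule.span_induction with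
  | mem y hy =>
    obtain ⟨m, rfl⟩ := hy
    rw [← AlgEquiv.mul_apply, ← pow_add]
    exact pow_apply_mem_orbitSpan σ z (t + m)
  | zero => simp
  | add a b _ _ ha hb => rw [map_add]; exact add_mem ha hb
  | smul a y _ hy => rw [map_zsmul]; exact Submodule.smul_mem _ _ hy

lemma pow_apply_eq_of_mem_orbitSpan {n : ℕ} {x y : L} (hx : (σ ^ n) x = x)
    (hy : y ∈ orbitSpan σ x) : (σ ^ n) y = y := by
  induction hy using Submodule.span_induction with
  | mem y hy =>
    obtain ⟨m, rfl⟩ := hy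
    rw [← AlgEquiv.mul_apply, ← pow_add, add_comm, pow_add, AlgEquiv.mul_apply, hx]
  | zero => simp
  | add a b _ _ ha hb => rw [map_add, ha, hb]
  | smul a y _ hy => rw [map_zsmul, hy]

lemma isIntegral_of_mem_orbitSpan {x y : L} (hx : IsIntegral ℤ x) (hy : y ∈ orbitSpan σ x) :
    IsIntegral ℤ y := by
  refine (Submodule.span_le (p := Subalgebra.toSubmodule (integralClosure ℤ L))).mpr ?_ hy
  rintro _ ⟨m, rfl⟩
  exact hx.map_algEquiv (σ ^ m)

lemma pow_apply_eq_pow_mod {n : ℕ} {x : L} (hx : (σ ^ n) x = x) (m : ℕ) :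
    (σ ^ m) x = (σ ^ (m % n)) x := by
  conv_lhs => rw [← Nat.mod_add_div m n, pow_add, pow_mul, AlgEquiv.mul_apply,
    pow_apply_eq_self_of_apply_eq _ hx]

lemma span_pow_apply_lt_eq_orbitSpan {n : ℕ} (hn : 0 < n) {x : L} (hx : (σ ^ n) x = x) :
    Submodule.span ℤ {y | ∃ i < n, y = (σ ^ i) x} = orbitSpan σ x := by
  refine le_antisymm (Submodule.span_mono ?_) (Submodule.span_le.mpr ?_)
  · rintro _ ⟨i, -, rfl⟩
    exact ⟨i, rfl⟩
  · rintro _ ⟨m, rfl⟩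
    exact Submodule.subset_span ⟨m % n, Nat.mod_lt m hn, pow_apply_eq_pow_mod σ hx m⟩

end OrbitSpan

section RelTrace

variable {F L : Type*} [CommRing F] [CommRing L] [Algebra F L] (σ : L ≃ₐ[F] L) (n d : ℕ)

/-- When `σ ^ n` has order `d`, this is the trace to the fixed field of `σ ^ n`. -/
def relTrace : L →+ L :=
  ∑ j ∈ range d, ((σ ^ ((j + 1) * n) : L ≃ₐ[F] L) : L →+ L)

lemma relTrace_apply (y : L) : relTrace σ n d y = ∑ j ∈ range d, (σ ^ ((j + 1) * n)) y := by
  simp [relTrace]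

lemma relTrace_pow_apply (m : ℕ) (y : L) :
    relTrace σ n d ((σ ^ m) y) = (σ ^ m) (relTrace σ n d y) := by
  simp only [relTrace_apply, map_sum, ← AlgEquiv.mul_apply, ← pow_add, add_comm]

lemma relTrace_mul_of_apply_eq {c : L} (hc : (σ ^ n) c = c) (y : L) :
    relTrace σ n d (y * c) = relTrace σ n d y * c := by
  simp only [relTrace_apply, sum_mul, map_mul, pow_mul', pow_apply_eq_self_of_apply_eq _ hc]

lemma apply_relTrace_of_apply_eq {z : L} (hz : (σ ^ (d * n)) z = z) :
    (σ ^ n) (relTrace σ n d z) = relTrace σ n d z := by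
  have hshift := (sum_range_succ' (fun j => (σ ^ ((j + 1) * n)) z) d).symm.trans
    (sum_range_succ (fun j => (σ ^ ((j + 1) * n)) z) d)
  rw [show (d + 1) * n = n + d * n by ring, pow_add, AlgEquiv.mul_apply, hz, zero_add, one_mul]
    at hshift
  rw [relTrace_apply, map_sum, ← add_right_cancel hshift]
  simp only [← AlgEquiv.mul_apply, ← pow_add]
  exact sum_congr rfl fun j _ => by ring_nf

lemma isIntegral_relTrace {z : L} (hz : IsIntegral ℤ z) : IsIntegral ℤ (relTrace σ n d z) := by
  rw [relTrace_apply]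
  exact IsIntegral.sum _ fun j _ => hz.map_algEquiv _

variable {σ n d}

lemma mul_mem_orbitSpan_relTrace (P : L → Prop) (hPsymm : ∀ c m, P c → P ((σ ^ m).symm c))
    (hPfix : ∀ c, P c → (σ ^ n) c = c) {z : L} (hPz : ∀ c, P c → z * c ∈ orbitSpan σ z)
    {y c : L} (hy : y ∈ orbitSpan σ (relTrace σ n d z)) (hc : P c) :
    y * c ∈ orbitSpan σ (relTrace σ n d z) := by
  induction hy using Submodule.span_induction with
  | mem y hy =>
    obtain ⟨m, rfl⟩ := hy
    have hc' := hPsymm c m hc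
    have hyc : (σ ^ m) (relTrace σ n d z) * c =
        (σ ^ m) (relTrace σ n d (z * (σ ^ m).symm c)) := by
      rw [relTrace_mul_of_apply_eq σ n d (hPfix _ hc'), map_mul, AlgEquiv.apply_symm_apply]
    rw [hyc]
    exact pow_apply_mem_orbitSpan_of_mem σ
      (map_mem_orbitSpan σ _ (relTrace_pow_apply σ n d) (hPz _ hc')) m
  | zero => simp
  | add a b _ _ ha hb => rw [add_mul]; exact add_mem ha hb
  | smul a y _ hy => rw [smul_mul_assoc]; exact Submodule.smul_mem _ _ hy

end RelTrace

lemma Nat.dvd_sub_one_of_mod_eq_one {p n : ℕ} (h : p % n = 1) : n ∣ p - 1 := by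
  simpa [h] using Nat.dvd_sub_mod (n := n) p

lemma Nat.Prime.odd_of_mod_eq_one {p n : ℕ} (hp : p.Prime) (h : p % n = 1) : Odd p := by
  refine hp.odd_of_ne_two ?_
  rintro rfl
  rw [Nat.dvd_one.mp (Nat.dvd_sub_one_of_mod_eq_one h), Nat.mod_one] at h
  exact zero_ne_one h

lemma IsPrimitiveRoot.zpow_eq_zpow_of_intCast_eq {L : Type*} [Field L] {ζ : L} {p : ℕ}
    (hζ : IsPrimitiveRoot ζ p) {a b : ℤ} (h : (a : ZMod p) = b) : ζ ^ a = ζ ^ b := by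
  obtain rfl | hp := eq_or_ne p 0
  · rw [show a = b from h]
  have hdvd : ζ ^ (a - b) = 1 := (hζ.zpow_eq_one_iff_dvd _).mpr
    (by simpa using (ZMod.intCast_eq_intCast_iff_dvd_sub b a p).mp h.symm)
  rw [← sub_add_cancel a b, zpow_add₀ (hζ.ne_zero hp), hdvd, one_mul]

lemma IsPrimitiveRoot.pow_eq_pow_of_natCast_eq {L : Type*} [Field L] {ζ : L} {p : ℕ}
    (hζ : IsPrimitiveRoot ζ p) {a b : ℕ} (h : (a : ZMod p) = b) : ζ ^ a = ζ ^ b := by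
  simpa using hζ.zpow_eq_zpow_of_intCast_eq (a := a) (b := b) (by exact_mod_cast h)

lemma IsPrimitiveRoot.isIntegral_zpow {L : Type*} [Field L] [CharZero L] {ζ : L} {p : ℕ}
    (hζ : IsPrimitiveRoot ζ p) (hp : 0 < p) (a : ℤ) : IsIntegral ℤ (ζ ^ a) := by
  refine IsIntegral.of_pow hp ?_
  rw [← zpow_natCast, ← zpow_mul, mul_comm, zpow_mul, zpow_natCast, hζ.pow_eq_one, one_zpow]
  exact isIntegral_one

lemma IsPrimitiveRoot.isIntegral_zpow_mul_prod_one_sub_pow {L ι : Type*} [Field L] [CharZero L]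
    {ζ : L} {p : ℕ} (hζ : IsPrimitiveRoot ζ p) (hp : 0 < p) (a : ℤ) (s : Finset ι) (e : ι → ℕ) :
    IsIntegral ℤ (ζ ^ a * ∏ j ∈ s, (1 - ζ ^ e j)) :=
  (hζ.isIntegral_zpow hp a).mul
    (IsIntegral.prod _ fun _ _ => isIntegral_one.sub ((hζ.isIntegral hp).pow _))

namespace ZMod

variable {p : ℕ} [Fact p.Prime] {g : ZMod p}

lemma exists_pow_eq_of_orderOf_eq (hg : orderOf g = p - 1) {a : ZMod p} (ha : a ≠ 0) :
    ∃ m : ℕ, g ^ m = a := by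
  have : NeZero (p - 1) := ⟨(Nat.sub_pos_of_lt (Fact.out : p.Prime).one_lt).ne'⟩
  obtain ⟨m, -, hm⟩ := (IsPrimitiveRoot.iff_orderOf.mpr hg).eq_pow_of_pow_eq_one
    (pow_card_sub_one_eq_one ha)
  exact ⟨m, hm⟩

lemma pow_div_two_eq_neg_one_of_orderOf_eq (hp : Odd p) (hg : orderOf g = p - 1) :
    g ^ ((p - 1) / 2) = -1 := by
  obtain ⟨k, rfl⟩ := hp
  have hk : k ≠ 0 := by rintro rfl; exact Nat.not_prime_one Fact.out
  have h2 := (IsPrimitiveRoot.iff_orderOf.mpr hg).pow_of_dvd hk ⟨2, by omega⟩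
  rw [show (2 * k + 1 - 1) / k = 2 by simp [Nat.mul_div_cancel _ (Nat.pos_of_ne_zero hk)]] at h2
  rw [show (2 * k + 1 - 1) / 2 = k by omega]
  exact h2.eq_neg_one_of_two_right

end ZMod

section Cyclotomic

variable {F L : Type*} [CommRing F] [Field L] [Algebra F L] {σ : L ≃ₐ[F] L} {p : ℕ}
  [Fact p.Prime] {ζ : L} {r : ℕ}

lemma one_sub_pow_mul_mem_orbitSpan (hζ : IsPrimitiveRoot ζ p)
    (hr : orderOf (r : ZMod p) = p - 1) (hσ : σ ζ = ζ ^ r) {w : L} (hw : σ w = -w) (s : ℕ) :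
    (1 - ζ ^ s) * w ∈ orbitSpan σ ((1 - ζ) * w) := by
  by_cases hs : (s : ZMod p) = 0
  · rw [hζ.pow_eq_pow_of_natCast_eq (b := 0) (by simpa using hs)]
    simp
  obtain ⟨m, hm⟩ := ZMod.exists_pow_eq_of_orderOf_eq hr hs
  have hζs : ζ ^ s = ζ ^ r ^ m := hζ.pow_eq_pow_of_natCast_eq (by push_cast; rw [hm])
  have hconj : (1 - ζ ^ s) * w = (-1) ^ m * (σ ^ m) ((1 - ζ) * w) := by
    rw [pow_apply_one_sub_mul σ hσ hw, ← mul_assoc, ← mul_pow, hζs]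
    simp
  rw [hconj]
  simpa using Submodule.smul_mem _ ((-1 : ℤ) ^ m) (pow_apply_mem_orbitSpan σ ((1 - ζ) * w) m)

lemma mul_mem_orbitSpan_of_mem_adjoin (hζ : IsPrimitiveRoot ζ p)
    (hr : orderOf (r : ZMod p) = p - 1) (hσ : σ ζ = ζ ^ r) {w : L} (hw : σ w = -w) {c : L}
    (hc : c ∈ Algebra.adjoin ℤ {ζ}) : c * ((1 - ζ) * w) ∈ orbitSpan σ ((1 - ζ) * w) := by
  have hpow (k : ℕ) : ζ ^ k * ((1 - ζ) * w) ∈ orbitSpan σ ((1 - ζ) * w) := by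
    rw [show ζ ^ k * ((1 - ζ) * w) = (1 - ζ ^ (k + 1)) * w - (1 - ζ ^ k) * w by ring]
    exact sub_mem (one_sub_pow_mul_mem_orbitSpan hζ hr hσ hw _)
      (one_sub_pow_mul_mem_orbitSpan hζ hr hσ hw _)
  rw [Algebra.adjoin_singleton_eq_range_aeval, AlgHom.mem_range] at hc
  obtain ⟨P, rfl⟩ := hc
  rw [Polynomial.aeval_eq_sum_range, sum_mul]
  exact Submodule.sum_mem _ fun k _ => by
    rw [smul_mul_assoc]
    exact Submodule.smul_mem _ _ (hpow k)

lemma apply_zpow_mul_prod_one_sub_eq_neg (hp : Odd p) (hζ : IsPrimitiveRoot ζ p)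
    (hr : orderOf (r : ZMod p) = p - 1) {lam : ℤ}
    (hlam : ((lam * ((r : ℤ) - 1) : ℤ) : ZMod p) = 1) (hσ : σ ζ = ζ ^ r) :
    σ (ζ ^ lam * ∏ j ∈ range ((p - 1) / 2), (1 - ζ ^ r ^ j)) =
      -(ζ ^ lam * ∏ j ∈ range ((p - 1) / 2), (1 - ζ ^ r ^ j)) := by
  set h := (p - 1) / 2
  set A := ∏ j ∈ range h, (1 - ζ ^ r ^ j)
  have hζlam : σ (ζ ^ lam) = ζ ^ lam * ζ := by
    rw [map_zpow₀, hσ, ← zpow_natCast, ← zpow_mul,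
      ← zpow_add_one₀ (hζ.ne_zero (Fact.out : p.Prime).ne_zero)]
    exact hζ.zpow_eq_zpow_of_intCast_eq (by push_cast at hlam ⊢; linear_combination hlam)
  have hA : σ A * (1 - ζ) = A * (1 - ζ ^ r ^ h) := by
    rw [← prod_range_succ (fun j => 1 - ζ ^ r ^ j), prod_range_succ', map_prod]
    simp only [map_sub, map_one, map_pow, hσ, ← pow_mul, ← pow_succ', pow_zero, pow_one]
  have hinv : ζ * ζ ^ r ^ h = 1 := by
    rw [← pow_succ', hζ.pow_eq_pow_of_natCast_eq (b := 0)]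
    · exact pow_zero ζ
    push_cast
    rw [ZMod.pow_div_two_eq_neg_one_of_orderOf_eq hp hr, neg_add_cancel]
  have h1ζ : 1 - ζ ≠ 0 := sub_ne_zero.mpr (hζ.ne_one (Fact.out : p.Prime).one_lt).symm
  apply mul_right_cancel₀ h1ζ
  calc σ (ζ ^ lam * A) * (1 - ζ) = ζ ^ lam * ζ * (σ A * (1 - ζ)) := by rw [map_mul, hζlam]; ring
    _ = ζ ^ lam * A * (ζ - ζ * ζ ^ r ^ h) := by rw [hA]; ring
    _ = -(ζ ^ lam * A) * (1 - ζ) := by rw [hinv]; ring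

lemma pow_sub_one_apply_one_sub_mul (hp : Odd p) (hζ : IsPrimitiveRoot ζ p)
    (hr : orderOf (r : ZMod p) = p - 1) (hσ : σ ζ = ζ ^ r) {w : L} (hw : σ w = -w) :
    (σ ^ (p - 1)) ((1 - ζ) * w) = (1 - ζ) * w := by
  rw [pow_apply_one_sub_mul σ hσ hw, (Nat.Odd.sub_odd hp odd_one).neg_one_pow, one_mul,
    hζ.pow_eq_pow_of_natCast_eq (b := 1) (by push_cast; rw [← hr, pow_orderOf_eq_one])]
  simp

end Cyclotomic

lemma mem_fixedField_zpowers_iff {F L : Type*} [Field F] [Field L] [Algebra F L]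
    {g : L ≃ₐ[F] L} {c : L} :
    c ∈ IntermediateField.fixedField (Subgroup.zpowers g) ↔ g c = c := by
  rw [IntermediateField.mem_fixedField_iff, Subgroup.forall_mem_zpowers]
  simpa [AlgEquiv.smul_def] using MulAction.mem_fixedBy_zpowers_iff_mem_fixedBy (g := g) (a := c)

namespace CyclotomicField

variable {p : ℕ} [Fact p.Prime] {ζ : CyclotomicField p ℚ}

lemma mem_adjoin_of_isIntegral (hζ : IsPrimitiveRoot ζ p) {c : CyclotomicField p ℚ}
    (hc : IsIntegral ℤ c) : c ∈ Algebra.adjoin ℤ {ζ} := by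
  have : NeZero (p : ℚ) := ⟨by exact_mod_cast (Fact.out : p.Prime).ne_zero⟩
  have : IsCyclotomicExtension {p} ℚ (CyclotomicField p ℚ) :=
    CyclotomicField.isCyclotomicExtension p ℚ
  obtain ⟨y, hy⟩ :=
    (IsCyclotomicExtension.Rat.isIntegralClosure_adjoin_singleton_of_prime hζ).isIntegral_iff.mp hc
  exact hy ▸ y.2

lemma mul_mem_orbitSpan_relTrace_of_isIntegral {σ : CyclotomicField p ℚ ≃ₐ[ℚ] CyclotomicField p ℚ}
    {r : ℕ} (hζ : IsPrimitiveRoot ζ p) (hr : orderOf (r : ZMod p) = p - 1) (hσ : σ ζ = ζ ^ r)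
    {w : CyclotomicField p ℚ} (hw : σ w = -w) {n d : ℕ} {y c : CyclotomicField p ℚ}
    (hy : y ∈ orbitSpan σ (relTrace σ n d ((1 - ζ) * w))) (hc : (σ ^ n) c = c)
    (hcint : IsIntegral ℤ c) : y * c ∈ orbitSpan σ (relTrace σ n d ((1 - ζ) * w)) := by
  refine mul_mem_orbitSpan_relTrace (fun c => (σ ^ n) c = c ∧ IsIntegral ℤ c) ?_
    (fun c hc => hc.1) ?_ hy ⟨hc, hcint⟩
  · rintro c m ⟨hc, hcint⟩
    exact ⟨apply_symm_apply_eq_of_commute (Commute.pow_pow_self σ n m) hc,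
      hcint.map_algEquiv _⟩
  · rintro c ⟨-, hcint⟩
    rw [mul_comm _ c]
    exact mul_mem_orbitSpan_of_mem_adjoin hζ hr hσ hw (mem_adjoin_of_isIntegral hζ hcint)

end CyclotomicField

theorem stmt6_general (p : ℕ+) (hp : (p : ℕ).Prime) (n : ℕ)
    (hpn : (p : ℕ) % n = 1)
    (ζ : CyclotomicField p ℚ) (hζ : IsPrimitiveRoot ζ p)
    (r : ℕ) (hr : orderOf (r : ZMod p) = (p : ℕ) - 1)
    (lam : ℤ) (hlam : ((lam * ((r : ℤ) - 1) : ℤ) : ZMod p) = 1)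
    (σ : CyclotomicField p ℚ ≃ₐ[ℚ] CyclotomicField p ℚ) (hσ : σ ζ = ζ ^ r)
    (z : CyclotomicField p ℚ)
    (hz : z = ζ ^ lam * (∏ j ∈ Finset.range (((p : ℕ) - 1) / 2), (1 - ζ ^ r ^ j)) * (1 - ζ))
    (x : CyclotomicField p ℚ)
    (hx : x = ∑ j ∈ Finset.range (((p : ℕ) - 1) / n), (σ ^ ((j + 1) * n)) z)
    (I : Submodule ℤ (CyclotomicField p ℚ))
    (hI : I = Submodule.span ℤ {y | ∃ i < n, y = (σ ^ i) x})
    (K : IntermediateField ℚ (CyclotomicField p ℚ))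
    (hK : K = IntermediateField.fixedField (Subgroup.zpowers (σ ^ n))) :
    (∀ y ∈ I, y ∈ K ∧ IsIntegral ℤ y) ∧
      ∀ y ∈ I, ∀ c : CyclotomicField p ℚ, c ∈ K → IsIntegral ℤ c → y * c ∈ I := by
  have := Fact.mk hp
  have hpodd := hp.odd_of_mod_eq_one hpn
  have hdvd := Nat.dvd_sub_one_of_mod_eq_one hpn
  set w := ζ ^ lam * ∏ j ∈ Finset.range (((p : ℕ) - 1) / 2), (1 - ζ ^ r ^ j)
  have hw : σ w = -w := apply_zpow_mul_prod_one_sub_eq_neg hpodd hζ hr hlam hσ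
  have hzw : z = (1 - ζ) * w := by rw [hz]; ring
  have hxz : x = relTrace σ n (((p : ℕ) - 1) / n) ((1 - ζ) * w) := by
    rw [hx, hzw, relTrace_apply]
  have hxfix : (σ ^ n) x = x := hxz ▸ apply_relTrace_of_apply_eq σ n _
    (by rw [Nat.div_mul_cancel hdvd]; exact pow_sub_one_apply_one_sub_mul hpodd hζ hr hσ hw)
  have hIx : I = orbitSpan σ x := hI.trans <| span_pow_apply_lt_eq_orbitSpan σ
    (Nat.pos_of_dvd_of_pos hdvd (Nat.sub_pos_of_lt hp.one_lt)) hxfix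
  have hmemK (c) : c ∈ K ↔ (σ ^ n) c = c := by rw [hK]; exact mem_fixedField_zpowers_iff
  have hxint : IsIntegral ℤ x := hxz ▸ isIntegral_relTrace σ n _
    ((isIntegral_one.sub (hζ.isIntegral p.pos)).mul
      (hζ.isIntegral_zpow_mul_prod_one_sub_pow p.pos lam _ _))
  rw [hIx]
  refine ⟨fun y hy => ⟨(hmemK y).2 (pow_apply_eq_of_mem_orbitSpan σ hxfix hy),
    isIntegral_of_mem_orbitSpan σ hxint hy⟩, fun y hy c hcK hc => ?_⟩
  rw [hxz] at hy ⊢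
  exact CyclotomicField.mul_mem_orbitSpan_relTrace_of_isIntegral hζ hr hσ hw hy
    ((hmemK c).1 hcK) hc

/-- The ℤ-module `I = ⟨x, σ(x), ..., σ^{n-1}(x)⟩_ℤ`, where `x = Tr_{ℚ(ζ_p)/K}(z)`,
is an ideal of the ring of integers `O_K` of the degree-`n` field `K` fixed by `σ^n`:
`I` consists of algebraic integers of `K` and is stable under multiplication by
algebraic integers of `K`. -/
theorem stmt6 (p : ℕ+) (hp : (p : ℕ).Prime) (n : ℕ) (hn1 : 1 < n) (hnodd : Odd n)
    (hpn : (p : ℕ) % n = 1)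
    (ζ : CyclotomicField p ℚ) (hζ : IsPrimitiveRoot ζ p)
    (r : ℕ) (hr : orderOf (r : ZMod p) = (p : ℕ) - 1)
    (lam : ℤ) (hlam : ((lam * ((r : ℤ) - 1) : ℤ) : ZMod p) = 1)
    (σ : CyclotomicField p ℚ ≃ₐ[ℚ] CyclotomicField p ℚ) (hσ : σ ζ = ζ ^ r)
    (z : CyclotomicField p ℚ)
    (hz : z = ζ ^ lam * (∏ j ∈ Finset.range (((p : ℕ) - 1) / 2), (1 - ζ ^ r ^ j)) * (1 - ζ))
    (x : CyclotomicField p ℚ)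
    (hx : x = ∑ j ∈ Finset.range (((p : ℕ) - 1) / n), (σ ^ ((j + 1) * n)) z)
    (I : Submodule ℤ (CyclotomicField p ℚ))
    (hI : I = Submodule.span ℤ {y | ∃ i < n, y = (σ ^ i) x})
    (K : IntermediateField ℚ (CyclotomicField p ℚ))
    (hK : K = IntermediateField.fixedField (Subgroup.zpowers (σ ^ n))) :
    (∀ y ∈ I, y ∈ K ∧ IsIntegral ℤ y) ∧
      ∀ y ∈ I, ∀ c : CyclotomicField p ℚ, c ∈ K → IsIntegral ℤ c → y * c ∈ I :=
  stmt6_general p hp n hpn ζ hζ r hr lam hlam σ hσ z hz x hx I hI K hK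
end
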